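/- Let d ≥ 1 and let g : (0,∞) → ℝ be twice differentiable with g''(τ) ≥ 0 for all τ > 0. Then the set 𝒜 := {(ρ, m, E) ∈ ℝ × ℝ^d × ℝ : ρ > 0 and E − ‖m‖²/(2ρ) ≥ ρ·g(1/ρ)} is convex. -/

import Mathlib

/-!
Rewritten as `ρ g(1/ρ) + ‖m‖²/(2ρ) ≤ E`, the defining constraint exhibits the set, after
reassociating the product, as the epigraph of `F(ρ, m) = ρ g(1/ρ) + ‖m‖²/(2ρ)` over `ρ > 0`.
The first term is the perspective of the convex function `g`; the second is jointly convex
because `‖a m + b n‖ ≤ a ‖m‖ + b ‖n‖` and `(x, s) ↦ s²/x` is jointly convex on `x > 0`.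
The epigraph of a convex function is convex.
-/

open Set

lemma convexOn_Ioi_of_hasDerivAt2_nonneg {f f' f'' : ℝ → ℝ}
    (hf' : ∀ x > (0 : ℝ), HasDerivAt f (f' x) x)
    (hf'' : ∀ x > (0 : ℝ), HasDerivAt f' (f'' x) x)
    (hf''₀ : ∀ x > (0 : ℝ), 0 ≤ f'' x) :
    ConvexOn ℝ (Ioi 0) f := by
  refine convexOn_of_hasDerivWithinAt2_nonneg (f' := f') (f'' := f'') (convex_Ioi 0)
    (fun x hx ↦ (hf' x hx).continuousAt.continuousWithinAt) ?_ ?_ ?_ <;>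
    simp only [interior_Ioi, mem_Ioi]
  · exact fun x hx ↦ (hf' x hx).hasDerivWithinAt
  · exact fun x hx ↦ (hf'' x hx).hasDerivWithinAt
  · exact hf''₀

lemma ConvexOn.mul_comp_one_div {g : ℝ → ℝ} (hg : ConvexOn ℝ (Ioi 0) g) :
    ConvexOn ℝ (Ioi 0) fun x ↦ x * g (1 / x) := by
  refine ⟨convex_Ioi 0, fun x (hx : 0 < x) y (hy : 0 < y) a b ha hb hab ↦ ?_⟩
  set z := a * x + b * y
  have hz : 0 < z := convex_Ioi (0 : ℝ) hx hy ha hb hab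
  have hweights : a * x / z + b * y / z = 1 := by rw [← add_div, div_self hz.ne']
  have hpoint : (a * x / z) • (1 / x) + (b * y / z) • (1 / y) = 1 / z := by
    simp only [smul_eq_mul]
    field_simp
    exact hab
  have key := hg.2 (mem_Ioi.2 (one_div_pos.2 hx)) (mem_Ioi.2 (one_div_pos.2 hy))
    (by positivity) (by positivity) hweights
  rw [hpoint, smul_eq_mul, smul_eq_mul] at key
  calc z * g (1 / z) ≤ z * (a * x / z * g (1 / x) + b * y / z * g (1 / y)) :=
        mul_le_mul_of_nonneg_left key hz.le
    _ = a • (x * g (1 / x)) + b • (y * g (1 / y)) := by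
        simp only [smul_eq_mul]
        field_simp

lemma add_sq_div_add_le {x y s t a b : ℝ} (hx : 0 < x) (hy : 0 < y) (ha : 0 ≤ a) (hb : 0 ≤ b)
    (hxy : 0 < a * x + b * y) :
    (a * s + b * t) ^ 2 / (a * x + b * y) ≤ a * (s ^ 2 / x) + b * (t ^ 2 / y) := by
  rw [div_le_iff₀ hxy, mul_div_assoc', mul_div_assoc', div_add_div _ _ hx.ne' hy.ne',
    div_mul_eq_mul_div, le_div_iff₀ (by positivity)]
  -- the difference of the two sides is `a b (s y - t x)²`
  nlinarith [mul_nonneg (mul_nonneg ha hb) (sq_nonneg (s * y - t * x))]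

lemma convexOn_norm_sq_div {E : Type*} [SeminormedAddCommGroup E] [NormedSpace ℝ E] :
    ConvexOn ℝ (Ioi 0 ×ˢ univ) fun p : ℝ × E ↦ ‖p.2‖ ^ 2 / p.1 := by
  refine ⟨(convex_Ioi 0).prod convex_univ, ?_⟩
  rintro ⟨x, m⟩ ⟨hx : 0 < x, -⟩ ⟨y, n⟩ ⟨hy : 0 < y, -⟩ a b ha hb hab
  have hxy : 0 < a * x + b * y := convex_Ioi (0 : ℝ) hx hy ha hb hab
  have hnorm : ‖a • m + b • n‖ ≤ a * ‖m‖ + b * ‖n‖ := by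
    simpa [norm_smul, abs_of_nonneg ha, abs_of_nonneg hb] using norm_add_le (a • m) (b • n)
  simp only [Prod.smul_mk, Prod.mk_add_mk, smul_eq_mul]
  calc ‖a • m + b • n‖ ^ 2 / (a * x + b * y)
      ≤ (a * ‖m‖ + b * ‖n‖) ^ 2 / (a * x + b * y) := by gcongr
    _ ≤ a * (‖m‖ ^ 2 / x) + b * (‖n‖ ^ 2 / y) := add_sq_div_add_le hx hy ha hb hxy

theorem stmt_18_general (d : ℕ) (g g' g'' : ℝ → ℝ)
    (hg' : ∀ τ > (0 : ℝ), HasDerivAt g (g' τ) τ)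
    (hg'' : ∀ τ > (0 : ℝ), HasDerivAt g' (g'' τ) τ)
    (hconv : ∀ τ > (0 : ℝ), 0 ≤ g'' τ) :
    Convex ℝ {u : ℝ × EuclideanSpace ℝ (Fin d) × ℝ |
      0 < u.1 ∧ u.1 * g (1 / u.1) ≤ u.2.2 - ‖u.2.1‖ ^ 2 / (2 * u.1)} := by
  have hg : ConvexOn ℝ (Ioi 0) g := convexOn_Ioi_of_hasDerivAt2_nonneg hg' hg'' hconv
  have hkinetic : ConvexOn ℝ (Ioi 0 ×ˢ univ)
      fun p : ℝ × EuclideanSpace ℝ (Fin d) ↦ ‖p.2‖ ^ 2 / (2 * p.1) :=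
    (convexOn_norm_sq_div.smul (by norm_num : (0 : ℝ) ≤ 1 / 2)).congr fun p _ ↦ by
      simp only [smul_eq_mul]
      ring
  have hinternal : ConvexOn ℝ (Ioi 0 ×ˢ univ)
      fun p : ℝ × EuclideanSpace ℝ (Fin d) ↦ p.1 * g (1 / p.1) := by
    rw [prod_univ]
    exact hg.mul_comp_one_div.comp_linearMap (LinearMap.fst ℝ ℝ _)
  have hepigraph := (hinternal.add hkinetic).convex_epigraph.linear_preimage
    (LinearEquiv.prodAssoc ℝ ℝ _ ℝ).symm.toLinearMap
  refine Eq.subst (motive := Convex ℝ) ?_ hepigraph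
  ext u
  simp only [mem_preimage, le_sub_iff_add_le]
  exact ⟨fun ⟨⟨hρ, _⟩, h⟩ ↦ ⟨hρ, h⟩, fun ⟨hρ, h⟩ ↦ ⟨⟨hρ, trivial⟩, h⟩⟩

/-- Convexity of the admissible (invariant) set (2.8): for a twice
differentiable convex energy isentrope `g`, the set
`𝒜 = {(ρ, m, E) : ρ > 0 and E − ‖m‖²/(2ρ) ≥ ρ g(1/ρ)}` is convex. -/
theorem stmt_18 (d : ℕ) (hd : 1 ≤ d) (g g' g'' : ℝ → ℝ)
    (hg' : ∀ τ > (0 : ℝ), HasDerivAt g (g' τ) τ)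
    (hg'' : ∀ τ > (0 : ℝ), HasDerivAt g' (g'' τ) τ)
    (hconv : ∀ τ > (0 : ℝ), 0 ≤ g'' τ) :
    Convex ℝ {u : ℝ × EuclideanSpace ℝ (Fin d) × ℝ |
      0 < u.1 ∧ u.1 * g (1 / u.1) ≤ u.2.2 - ‖u.2.1‖ ^ 2 / (2 * u.1)} :=
  stmt_18_general d g g' g'' hg' hg'' hconv
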